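/- If −1 < l < 1, m > 0, and 2l − m + 2 > 0, then both complex roots of λ² + (m − l − 1)·λ + l = 0 have modulus strictly less than 1. -/

import Mathlib

/-! Jury's stability test for a real monic quadratic `z² + a z + b`. For a non-real root `z`
the imaginary part of the equation forces `2 Re z = -a`, and then its real part gives
`‖z‖² = b`. Real roots `x, r` satisfy `(1 - x)(1 - r) = 1 + a + b > 0` and
`(1 + x)(1 + r) = 1 - a + b > 0`, hence `(1 - x²)(1 - r²) > 0`: both lie inside or both
outside the unit interval, and `x² r² = b² < 1` rules out the latter. -/

theorem Complex.normSq_eq_of_quadratic_root_of_im_ne_zero {a b : ℝ} {z : ℂ}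
    (hz : z ^ 2 + a * z + b = 0) (him : z.im ≠ 0) : Complex.normSq z = b := by
  have hre : z.re ^ 2 - z.im ^ 2 + a * z.re + b = 0 := by
    simpa [sq] using congrArg Complex.re hz
  have hvertex : 2 * z.re + a = 0 := by
    have him_eq : z.re * z.im + z.im * z.re + a * z.im = 0 := by
      simpa [sq] using congrArg Complex.im hz
    have : z.im * (2 * z.re + a) = 0 := by linear_combination him_eq
    exact (mul_eq_zero.mp this).resolve_left him
  rw [Complex.normSq_apply]
  linear_combination -hre + z.re * hvertex

theorem abs_lt_one_of_quadratic_root {a b x : ℝ} (hb : |b| < 1) (ha : |a| < 1 + b)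
    (hx : x ^ 2 + a * x + b = 0) : |x| < 1 := by
  obtain ⟨ha₁, ha₂⟩ := abs_lt.mp ha
  set r := -a - x
  have hprod : x * r = b := by linear_combination -hx
  have hone : 0 < (1 - x) * (1 - r) := by nlinarith
  have hneg_one : 0 < (1 + x) * (1 + r) := by nlinarith
  have hsq : 0 < (1 - x ^ 2) * (1 - r ^ 2) := by
    linear_combination mul_pos hone hneg_one
  have hprod_sq : x ^ 2 * r ^ 2 < 1 := by
    rw [← mul_pow, hprod, sq_lt_one_iff_abs_lt_one]; exact hb
  rw [← sq_lt_one_iff_abs_lt_one]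
  by_contra! hx1
  nlinarith [sq_nonneg r]

theorem norm_lt_one_of_quadratic_root {a b : ℝ} (hb : |b| < 1) (ha : |a| < 1 + b) {z : ℂ}
    (hz : z ^ 2 + a * z + b = 0) : ‖z‖ < 1 := by
  rcases eq_or_ne z.im 0 with him | him
  · have hre : z.re ^ 2 + a * z.re + b = 0 := by
      simpa [sq, him] using congrArg Complex.re hz
    rw [← Complex.re_add_im z, him, Complex.ofReal_zero, zero_mul, add_zero, Complex.norm_real,
      Real.norm_eq_abs]
    exact abs_lt_one_of_quadratic_root hb ha hre
  · rw [← sq_lt_one_iff₀ (norm_nonneg z), Complex.sq_norm,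
      Complex.normSq_eq_of_quadratic_root_of_im_ne_zero hz him]
    exact (abs_lt.mp hb).2

theorem stmt5 (m l : ℝ) (hl1 : -1 < l) (hl2 : l < 1) (hm : 0 < m) (hs : 0 < 2 * l - m + 2) :
    ∀ lam : ℂ, lam ^ 2 + ((m : ℂ) - l - 1) * lam + l = 0 → ‖lam‖ < 1 := by
  intro lam h
  refine norm_lt_one_of_quadratic_root (a := m - l - 1) (abs_lt.mpr ⟨hl1, hl2⟩)
    (abs_lt.mpr ⟨by linarith, by linarith⟩) (by exact_mod_cast h)
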